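/- For every γ strictly between 𝒩(0) = ‖F‖_F/√ℓ and σ_max(F), there is a unique q_γ ∈ (0, σ_max(F)^{−2}) with 𝒩(q_γ) = γ, and the function q ↦ 𝔄(q,γ) attains its maximum over [0, σ_max(F)^{−2}) at q = q_γ, with maximal value 𝔄(q_γ, γ) = 𝒜(q_γ). -/

import Mathlib

open MeasureTheory Real Matrix

/-- The largest singular value of `F`: the supremum of `‖F w‖` over unit vectors. -/
noncomputable def sigmaMax {s ℓ : ℕ} (F : Matrix (Fin s) (Fin ℓ) ℝ) : ℝ :=
  sSup {x : ℝ | ∃ w : Fin ℓ → ℝ, (∑ i, (w i)^2) = 1 ∧ x = Real.sqrt (∑ j, (F.mulVec w j)^2)}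

/-- `S(q) = (I − qΛ)⁻¹` with `Λ = FᵀF`. -/
noncomputable def Sq {s ℓ : ℕ} (F : Matrix (Fin s) (Fin ℓ) ℝ) (q : ℝ) :
    Matrix (Fin ℓ) (Fin ℓ) ℝ :=
  (1 - q • (Fᵀ * F))⁻¹

/-- `𝒜(q) = −(1/2)·ln det(ℓ·S(q)/Tr S(q))`. -/
noncomputable def Afun {s ℓ : ℕ} (F : Matrix (Fin s) (Fin ℓ) ℝ) (q : ℝ) : ℝ :=
  -(1 / 2) * Real.log ((((ℓ : ℝ) / (Sq F q).trace) • Sq F q).det)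

/-- `𝒩(q) = sqrt(Tr(Λ·S(q))/Tr S(q))`. -/
noncomputable def Nfun {s ℓ : ℕ} (F : Matrix (Fin s) (Fin ℓ) ℝ) (q : ℝ) : ℝ :=
  Real.sqrt ((Fᵀ * F * Sq F q).trace / (Sq F q).trace)

/-- `𝔄(q,γ) = (1/2)·ln det(I − qΛ) − (ℓ/2)·ln(1 − qγ²)`. -/
noncomputable def AAfun {s ℓ : ℕ} (F : Matrix (Fin s) (Fin ℓ) ℝ) (q γ : ℝ) : ℝ :=
  (1 / 2) * Real.log (1 - q • (Fᵀ * F)).det - ((ℓ : ℝ) / 2) * Real.log (1 - q * γ^2)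

/-- Frobenius norm of a matrix. -/
noncomputable def frobNorm {s ℓ : ℕ} (F : Matrix (Fin s) (Fin ℓ) ℝ) : ℝ :=
  Real.sqrt ((Fᵀ * F).trace)

/-!
Diagonalising `Λ = FᵀF` with eigenvalues `μᵢ ∈ [0, M]`, `M = σ_max(F)²`, everything becomes
scalar: with weights `wᵢ = (1 - q μᵢ)⁻¹`, `𝒩(q)² = ∑ μᵢ wᵢ / ∑ wᵢ` and
`∂𝔄/∂q = Tr S(q) · (γ² - 𝒩(q)²) / (2 (1 - q γ²))`.
Since `Λ` is not scalar, a Lagrange-type identity shows that `𝒩²` is strictly increasing on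
`[0, M⁻¹)`; it starts at the mean eigenvalue `‖F‖_F² / ℓ` and tends to `M` as `q → M⁻¹`, because
the weight of the top eigenvalue blows up. So `𝒩 = γ` has exactly one root `q_γ`, and `𝔄(·, γ)`
increases before it and decreases after it. At the root, `ℓ / Tr S(q_γ) = 1 - q_γ γ²`, which turns
`𝔄(q_γ, γ)` into `𝒜(q_γ)`.
-/

open Finset Set Filter Topology

theorem isMaxOn_of_hasDerivAt_sign {f f' : ℝ → ℝ} {s : Set ℝ} {c : ℝ} (hs : s.OrdConnected)
    (hc : c ∈ s) (hf : ∀ x ∈ s, HasDerivAt f (f' x) x)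
    (hleft : ∀ x ∈ s, x < c → 0 ≤ f' x) (hright : ∀ x ∈ s, c < x → f' x ≤ 0) :
    IsMaxOn f s c := by
  have hcont : ∀ a ∈ s, ∀ b ∈ s, ContinuousOn f (Icc a b) := fun a ha b hb x hx =>
    (hf x (hs.out ha hb hx)).continuousAt.continuousWithinAt
  have hderiv : ∀ a ∈ s, ∀ b ∈ s, ∀ x ∈ interior (Icc a b),
      HasDerivWithinAt f (f' x) (interior (Icc a b)) x := fun a ha b hb x hx =>
    (hf x (hs.out ha hb (interior_subset hx))).hasDerivWithinAt
  intro x hx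
  rcases le_or_gt x c with hxc | hcx
  · refine monotoneOn_of_hasDerivWithinAt_nonneg (convex_Icc x c) (hcont x hx c hc)
      (hderiv x hx c hc) (fun y hy => ?_) ⟨le_rfl, hxc⟩ ⟨hxc, le_rfl⟩ hxc
    rw [interior_Icc] at hy
    exact hleft y (hs.out hx hc (Ioo_subset_Icc_self hy)) hy.2
  · refine antitoneOn_of_hasDerivWithinAt_nonpos (convex_Icc c x) (hcont c hc x hx)
      (hderiv c hc x hx) (fun y hy => ?_) ⟨le_rfl, hcx.le⟩ ⟨hcx.le, le_rfl⟩ hcx.le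
    rw [interior_Icc] at hy
    exact hright y (hs.out hc hx (Ioo_subset_Icc_self hy)) hy.1

theorem two_mul_sum_mul_sum_sub {ι : Type*} [Fintype ι] (x a b : ι → ℝ) :
    2 * ((∑ i, x i * b i) * ∑ i, a i - (∑ i, x i * a i) * ∑ i, b i) =
      ∑ i, ∑ j, (x i - x j) * (b i * a j - a i * b j) := by
  calc _ = ∑ i, ∑ j, (x i * b i * a j - x i * a i * b j)
        + ∑ i, ∑ j, (x i * b i * a j - x i * a i * b j) := by
        simp only [sum_sub_distrib, ← sum_mul_sum]
        ring
    _ = ∑ i, ∑ j, (x i * b i * a j - x i * a i * b j)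
        + ∑ i, ∑ j, (x j * b j * a i - x j * a j * b i) := by
        rw [sum_comm (s := univ) (t := univ) (f := fun j i => x j * b j * a i - x j * a j * b i)]
    _ = _ := by
        simp only [← sum_add_distrib]
        exact sum_congr rfl fun i _ => sum_congr rfl fun j _ => by ring

namespace Eigen

lemma pos_of_ne {ι : Type*} {μ : ι → ℝ} (hμ : ∀ i, 0 ≤ μ i) {k : ι} (hk : ∀ i, μ i ≤ μ k)
    (hne : ∃ i j, μ i ≠ μ j) : 0 < μ k := by
  obtain ⟨i, j, hij⟩ := hne
  by_contra! h
  exact hij (by linarith [hk i, hk j, hμ i, hμ j])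

variable {ι : Type*} [Fintype ι]

/- `trS μ q`, `trΛS μ q`, `Nsq μ q` and `AA μ γ² q` are `Tr S(q)`, `Tr (Λ S(q))`, `𝒩(q)²` and
`𝔄(q, γ)` written in an eigenbasis of `Λ`, whose eigenvalues are `μ`. -/

noncomputable def trS (μ : ι → ℝ) (q : ℝ) : ℝ := ∑ i, (1 - q * μ i)⁻¹

noncomputable def trΛS (μ : ι → ℝ) (q : ℝ) : ℝ := ∑ i, μ i * (1 - q * μ i)⁻¹

noncomputable def Nsq (μ : ι → ℝ) (q : ℝ) : ℝ := trΛS μ q / trS μ q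

noncomputable def AA (μ : ι → ℝ) (γsq q : ℝ) : ℝ :=
  (1 / 2) * ∑ i, Real.log (1 - q * μ i) - (Fintype.card ι / 2) * Real.log (1 - q * γsq)

variable {μ : ι → ℝ} {M q γsq : ℝ}

lemma one_sub_mul_pos (hM : 0 < M) (hq : q ∈ Ico 0 M⁻¹) {x : ℝ} (hx : x ≤ M) :
    0 < 1 - q * x := by
  have : q * M < 1 := by
    calc q * M < M⁻¹ * M := mul_lt_mul_of_pos_right hq.2 hM
      _ = 1 := inv_mul_cancel₀ hM.ne'
  nlinarith [mul_le_mul_of_nonneg_left hx hq.1]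

lemma trS_pos [Nonempty ι] (hM : 0 < M) (hμM : ∀ i, μ i ≤ M) (hq : q ∈ Ico 0 M⁻¹) :
    0 < trS μ q :=
  sum_pos (fun i _ => inv_pos.2 (one_sub_mul_pos hM hq (hμM i))) univ_nonempty

lemma Nsq_nonneg [Nonempty ι] (hμ : ∀ i, 0 ≤ μ i) (hM : 0 < M) (hμM : ∀ i, μ i ≤ M)
    (hq : q ∈ Ico 0 M⁻¹) : 0 ≤ Nsq μ q :=
  div_nonneg
    (sum_nonneg fun i _ => mul_nonneg (hμ i) (inv_pos.2 (one_sub_mul_pos hM hq (hμM i))).le)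
    (trS_pos hM hμM hq).le

lemma trS_sub_card (hq : ∀ i, 1 - q * μ i ≠ 0) : trS μ q - Fintype.card ι = q * trΛS μ q := by
  have hcard : (Fintype.card ι : ℝ) = ∑ _i : ι, 1 := by simp
  rw [hcard, trS, trΛS, ← sum_sub_distrib, mul_sum]
  refine sum_congr rfl fun i _ => ?_
  field_simp [hq i]
  ring

lemma Nsq_strictMonoOn [Nonempty ι] (hM : 0 < M) (hμM : ∀ i, μ i ≤ M)
    (hne : ∃ i j, μ i ≠ μ j) : StrictMonoOn (Nsq μ) (Ico 0 M⁻¹) := by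
  intro q₁ hq₁ q₂ hq₂ hlt
  rw [Nsq, Nsq, div_lt_div_iff₀ (trS_pos hM hμM hq₁) (trS_pos hM hμM hq₂), ← sub_pos,
    ← mul_pos_iff_of_pos_left two_pos, trS, trS, trΛS, trΛS, two_mul_sum_mul_sum_sub]
  have hne₁ i := (one_sub_mul_pos hM hq₁ (hμM i)).ne'
  have hne₂ i := (one_sub_mul_pos hM hq₂ (hμM i)).ne'
  have hpos₁ i := inv_pos.2 (one_sub_mul_pos hM hq₁ (hμM i))
  have hpos₂ i := inv_pos.2 (one_sub_mul_pos hM hq₂ (hμM i))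
  have hterm i j : (μ i - μ j) *
      ((1 - q₂ * μ i)⁻¹ * (1 - q₁ * μ j)⁻¹ - (1 - q₁ * μ i)⁻¹ * (1 - q₂ * μ j)⁻¹) =
      (q₂ - q₁) * (μ i - μ j) ^ 2 * ((1 - q₁ * μ i)⁻¹ * (1 - q₁ * μ j)⁻¹ *
        (1 - q₂ * μ i)⁻¹ * (1 - q₂ * μ j)⁻¹) := by
    rw [← mul_inv, ← mul_inv, inv_sub_inv (mul_ne_zero (hne₂ i) (hne₁ j))
      (mul_ne_zero (hne₁ i) (hne₂ j)), div_eq_mul_inv]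
    simp only [mul_inv]
    ring
  have hw i j := mul_pos (mul_pos (mul_pos (hpos₁ i) (hpos₁ j)) (hpos₂ i)) (hpos₂ j)
  have hnonneg i j := mul_nonneg (mul_nonneg (sub_pos.2 hlt).le (sq_nonneg (μ i - μ j))) (hw i j).le
  obtain ⟨i₀, j₀, hij⟩ := hne
  simp only [hterm]
  refine sum_pos' (fun i _ => sum_nonneg fun j _ => hnonneg i j)
    ⟨i₀, mem_univ _, sum_pos' (fun j _ => hnonneg i₀ j) ⟨j₀, mem_univ _, ?_⟩⟩
  exact mul_pos (mul_pos (sub_pos.2 hlt) (pow_two_pos_of_ne_zero (sub_ne_zero.2 hij))) (hw i₀ j₀)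

lemma Nsq_zero : Nsq μ 0 = (∑ i, μ i) / Fintype.card ι := by
  simp [Nsq, trS, trΛS]

lemma continuousOn_Nsq [Nonempty ι] (hM : 0 < M) (hμM : ∀ i, μ i ≤ M) :
    ContinuousOn (Nsq μ) (Ico 0 M⁻¹) := by
  have hden : ∀ q ∈ Ico 0 M⁻¹, ∀ i, 1 - q * μ i ≠ 0 := fun q hq i =>
    (one_sub_mul_pos hM hq (hμM i)).ne'
  refine ContinuousOn.div ?_ ?_ fun q hq => (trS_pos hM hμM hq).ne'
  · unfold trΛS
    fun_prop (disch := intros; apply hden <;> assumption)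
  · unfold trS
    fun_prop (disch := intros; apply hden <;> assumption)

/-- `M * Tr S - Tr ΛS = ∑ (M - μᵢ) wᵢ ≤ card ι * M`, while `Tr S ≥ (1 - q M)⁻¹`. -/
lemma sub_le_Nsq (hμ : ∀ i, 0 ≤ μ i) (hM : 0 < M) (hμM : ∀ i, μ i ≤ M) {k : ι} (hk : μ k = M)
    (hq : q ∈ Ico 0 M⁻¹) : M - Fintype.card ι * M * (1 - q * M) ≤ Nsq μ q := by
  have : Nonempty ι := ⟨k⟩
  have hw i : 0 < 1 - q * μ i := one_sub_mul_pos hM hq (hμM i)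
  have hqM : 0 < 1 - q * M := one_sub_mul_pos hM hq le_rfl
  have hψ := trS_pos hM hμM hq
  have hnum : M * trS μ q - trΛS μ q ≤ Fintype.card ι * M :=
    calc M * trS μ q - trΛS μ q = ∑ i, (M - μ i) * (1 - q * μ i)⁻¹ := by
          simp only [trS, trΛS, mul_sum, ← sum_sub_distrib, sub_mul]
      _ ≤ ∑ _i : ι, M := sum_le_sum fun i _ => by
          rw [mul_inv_le_iff₀ (hw i)]
          nlinarith [mul_nonneg (hμ i) hqM.le]
      _ = Fintype.card ι * M := by simp
  have htop : 1 ≤ (1 - q * M) * trS μ q := by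
    have : (1 - q * M)⁻¹ ≤ trS μ q := by
      rw [← hk]
      exact single_le_sum (f := fun i => (1 - q * μ i)⁻¹) (fun i _ => (inv_pos.2 (hw i)).le)
        (mem_univ k)
    rwa [inv_le_iff_one_le_mul₀' hqM] at this
  have hdiff : M - Nsq μ q = (M * trS μ q - trΛS μ q) / trS μ q := by
    rw [Nsq]
    field_simp
  rw [sub_le_comm, hdiff, div_le_iff₀ hψ]
  nlinarith [mul_le_mul_of_nonneg_left htop (by positivity : (0 : ℝ) ≤ Fintype.card ι * M)]

lemma exists_lt_Nsq (hμ : ∀ i, 0 ≤ μ i) (hM : 0 < M) (hμM : ∀ i, μ i ≤ M) {k : ι}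
    (hk : μ k = M) (hγ : γsq < M) : ∃ q ∈ Ioo 0 M⁻¹, γsq < Nsq μ q := by
  have hlim : Tendsto (fun q => M - Fintype.card ι * M * (1 - q * M)) (𝓝[<] M⁻¹) (𝓝 M) := by
    refine tendsto_nhdsWithin_of_tendsto_nhds ((by fun_prop : Continuous _).tendsto' _ _ ?_)
    simp [inv_mul_cancel₀ hM.ne']
  obtain ⟨q, hγq, hq⟩ :=
    ((hlim.eventually (lt_mem_nhds hγ)).and (Ioo_mem_nhdsLT (inv_pos.2 hM))).exists
  exact ⟨q, hq, hγq.trans_le (sub_le_Nsq hμ hM hμM hk (Ioo_subset_Ico_self hq))⟩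

lemma exists_Nsq_eq (hμ : ∀ i, 0 ≤ μ i) (hM : 0 < M) (hμM : ∀ i, μ i ≤ M) {k : ι}
    (hk : μ k = M) (hmean : ∑ i, μ i < Fintype.card ι * γsq) (hγ : γsq < M) :
    ∃ q ∈ Ioo 0 M⁻¹, Nsq μ q = γsq := by
  have : Nonempty ι := ⟨k⟩
  obtain ⟨q₀, hq₀, hγq₀⟩ := exists_lt_Nsq hμ hM hμM hk hγ
  have hNsq0 : Nsq μ 0 < γsq := by
    rw [Nsq_zero, div_lt_iff₀' (by exact_mod_cast Fintype.card_pos)]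
    exact hmean
  obtain ⟨q, hq, hroot⟩ := intermediate_value_Ioo hq₀.1.le
    ((continuousOn_Nsq hM hμM).mono fun x hx => ⟨hx.1, hx.2.trans_lt hq₀.2⟩) ⟨hNsq0, hγq₀⟩
  exact ⟨q, ⟨hq.1, hq.2.trans hq₀.2⟩, hroot⟩

lemma hasDerivAt_AA (hq : ∀ i, 1 - q * μ i ≠ 0) (hγ : 1 - q * γsq ≠ 0) (hψ : trS μ q ≠ 0) :
    HasDerivAt (AA μ γsq) (trS μ q * (γsq - Nsq μ q) / (2 * (1 - q * γsq))) q := by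
  have hlog {c : ℝ} (hc : 1 - q * c ≠ 0) :
      HasDerivAt (fun x => Real.log (1 - x * c)) (-c / (1 - q * c)) q := by
    simpa using (((hasDerivAt_id q).mul_const c).const_sub 1).log hc
  have h := ((HasDerivAt.fun_sum (u := univ) fun i _ => hlog (hq i)).const_mul (1 / 2 : ℝ)).sub
    ((hlog hγ).const_mul (Fintype.card ι / 2 : ℝ))
  refine h.congr_deriv ?_
  have hφ : ∑ i, -μ i / (1 - q * μ i) = -trΛS μ q := by
    simp only [trΛS, div_eq_mul_inv, neg_mul, sum_neg_distrib]
  have hcard := trS_sub_card hq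
  have hcancel : -γsq / (1 - q * γsq) * (1 - q * γsq) = -γsq := div_mul_cancel₀ _ hγ
  rw [hφ, Nsq, mul_sub, mul_div_cancel₀ _ hψ, eq_div_iff (mul_ne_zero two_ne_zero hγ)]
  linear_combination (-(Fintype.card ι : ℝ)) * hcancel - γsq * hcard

lemma isMaxOn_AA [Nonempty ι] (hM : 0 < M) (hμM : ∀ i, μ i ≤ M) (hne : ∃ i j, μ i ≠ μ j)
    (hγ : γsq ≤ M) {qγ : ℝ} (hqγ : qγ ∈ Ico 0 M⁻¹) (hroot : Nsq μ qγ = γsq) :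
    IsMaxOn (AA μ γsq) (Ico 0 M⁻¹) qγ := by
  have hden q (hq : q ∈ Ico 0 M⁻¹) : 0 < 2 * (1 - q * γsq) :=
    mul_pos two_pos (one_sub_mul_pos hM hq hγ)
  refine isMaxOn_of_hasDerivAt_sign ordConnected_Ico hqγ (fun q hq => hasDerivAt_AA
      (fun i => (one_sub_mul_pos hM hq (hμM i)).ne') (one_sub_mul_pos hM hq hγ).ne'
      (trS_pos hM hμM hq).ne') (fun q hq hlt => ?_) (fun q hq hlt => ?_)
  · have := Nsq_strictMonoOn hM hμM hne hq hqγ hlt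
    exact div_nonneg (mul_nonneg (trS_pos hM hμM hq).le (by linarith)) (hden q hq).le
  · have := Nsq_strictMonoOn hM hμM hne hqγ hq hlt
    exact div_nonpos_of_nonpos_of_nonneg
      (mul_nonpos_of_nonneg_of_nonpos (trS_pos hM hμM hq).le (by linarith)) (hden q hq).le

lemma AA_eq_of_Nsq_eq [Nonempty ι] (hq : ∀ i, 0 < 1 - q * μ i) (hroot : Nsq μ q = γsq) :
    AA μ γsq q = -(1 / 2) * Real.log
      ((Fintype.card ι / trS μ q) ^ Fintype.card ι * ∏ i, (1 - q * μ i)⁻¹) := by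
  have hψ : 0 < trS μ q := sum_pos (fun i _ => inv_pos.2 (hq i)) univ_nonempty
  have hcard : Fintype.card ι / trS μ q = 1 - q * γsq := by
    have := trS_sub_card fun i => (hq i).ne'
    rw [← hroot, Nsq, div_eq_iff hψ.ne']
    field_simp
    linarith
  have hγ : 0 < 1 - q * γsq := hcard ▸ div_pos (by exact_mod_cast Fintype.card_pos) hψ
  rw [hcard, Real.log_mul (pow_pos hγ _).ne' (prod_pos fun i _ => inv_pos.2 (hq i)).ne',
    Real.log_pow, Real.log_prod fun i _ => (inv_pos.2 (hq i)).ne', AA]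
  simp only [Real.log_inv, sum_neg_distrib]
  ring

end Eigen

namespace Matrix.IsHermitian
variable {n : Type*} [Fintype n] [DecidableEq n] {A : Matrix n n ℝ}

lemma trace_cfc (hA : A.IsHermitian) (f : ℝ → ℝ) : (cfc f A).trace = ∑ i, f (hA.eigenvalues i) := by
  rw [hA.cfc_eq, IsHermitian.cfc, Unitary.conjStarAlgAut_apply, trace_mul_cycle,
    Unitary.coe_star_mul_self, one_mul, trace_diagonal]
  simp

lemma det_cfc (hA : A.IsHermitian) (f : ℝ → ℝ) : (cfc f A).det = ∏ i, f (hA.eigenvalues i) := by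
  rw [hA.cfc_eq, IsHermitian.cfc, Unitary.conjStarAlgAut_apply, det_mul_right_comm]
  simp

lemma cfc_one_sub_mul (hA : A.IsHermitian) (q : ℝ) : cfc (fun x => 1 - q * x) A = 1 - q • A := by
  rw [cfc_sub (fun _ => 1) (fun x => q * x) A, cfc_const_one ℝ A, cfc_const_mul q (fun x => x) A,
    cfc_id' ℝ A]

lemma inv_one_sub_smul (hA : A.IsHermitian) {q : ℝ} (hq : ∀ i, 1 - q * hA.eigenvalues i ≠ 0) :
    (1 - q • A)⁻¹ = cfc (fun x => (1 - q * x)⁻¹) A := by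
  rw [cfc_inv (fun x => 1 - q * x) A, hA.cfc_one_sub_mul, nonsing_inv_eq_ringInverse]
  rw [hA.spectrum_real_eq_range_eigenvalues]
  rintro _ ⟨i, rfl⟩
  exact hq i

lemma exists_eigenvalues_ne [Nonempty n] (hA : A.IsHermitian) (h : ∀ c : ℝ, A ≠ c • 1) :
    ∃ i j, hA.eigenvalues i ≠ hA.eigenvalues j := by
  by_contra! hconst
  obtain ⟨c, hc⟩ : ∃ c, ∀ i, hA.eigenvalues i = c := ⟨_, fun i => hconst i (Classical.arbitrary n)⟩
  refine h c ?_
  rw [← cfc_id' ℝ A, cfc_congr (g := fun _ => c), cfc_const c A, Algebra.algebraMap_eq_smul_one]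
  rw [hA.spectrum_real_eq_range_eigenvalues]
  rintro _ ⟨i, rfl⟩
  exact hc i

open scoped MatrixOrder in
lemma dotProduct_mulVec_le (hA : A.IsHermitian) {M : ℝ} (hM : ∀ i, hA.eigenvalues i ≤ M)
    (w : n → ℝ) : w ⬝ᵥ (A *ᵥ w) ≤ M * (w ⬝ᵥ w) := by
  have hpos : (M • 1 - A).PosSemidef := by
    have hcfc : cfc (fun x => M - x) A = M • 1 - A := by
      rw [cfc_sub (fun _ => M) (fun x => x) A, cfc_const M A, cfc_id' ℝ A,
        Algebra.algebraMap_eq_smul_one]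
    rw [← nonneg_iff_posSemidef, ← hcfc]
    refine cfc_nonneg fun x hx => ?_
    rw [hA.spectrum_real_eq_range_eigenvalues] at hx
    obtain ⟨i, rfl⟩ := hx
    exact sub_nonneg.2 (hM i)
  have := hpos.dotProduct_mulVec_nonneg w
  simpa [sub_mulVec, dotProduct_sub, smul_mulVec, dotProduct_smul] using this

end Matrix.IsHermitian

namespace Matrix

lemma isHermitian_transpose_mul_self {m n : Type*} [Fintype m] (F : Matrix m n ℝ) :
    (Fᵀ * F).IsHermitian := by
  simpa only [conjTranspose_eq_transpose_of_trivial] using isHermitian_conjTranspose_mul_self F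

lemma posSemidef_transpose_mul_self {m n : Type*} [Fintype m] [Fintype n] (F : Matrix m n ℝ) :
    (Fᵀ * F).PosSemidef := by
  simpa only [conjTranspose_eq_transpose_of_trivial] using posSemidef_conjTranspose_mul_self F

lemma dotProduct_self_eq_sum_sq {n R : Type*} [Fintype n] [CommSemiring R] (v : n → R) :
    v ⬝ᵥ v = ∑ i, v i ^ 2 := by
  simp only [dotProduct, sq]

lemma sum_sq_mulVec {m n : Type*} [Fintype m] [Fintype n] (F : Matrix m n ℝ) (w : n → ℝ) :
    ∑ j, (F *ᵥ w) j ^ 2 = w ⬝ᵥ ((Fᵀ * F) *ᵥ w) := by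
  rw [← dotProduct_self_eq_sum_sq, ← mulVec_mulVec, mulVec_transpose, dotProduct_mulVec,
    dotProduct_comm]

end Matrix

section

variable {s ℓ : ℕ} {F : Matrix (Fin s) (Fin ℓ) ℝ} (hA : (Fᵀ * F).IsHermitian)

lemma sigmaMax_eq_sqrt_eigenvalue {k : Fin ℓ} (hk : ∀ i, hA.eigenvalues i ≤ hA.eigenvalues k) :
    sigmaMax F = √(hA.eigenvalues k) := by
  have hv : ∑ i, (hA.eigenvectorBasis k).ofLp i ^ 2 = 1 := by
    have := hA.eigenvectorBasis.orthonormal.1 k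
    rw [EuclideanSpace.norm_eq, Real.sqrt_eq_one] at this
    simpa only [Real.norm_eq_abs, sq_abs] using this
  refine IsGreatest.csSup_eq ⟨⟨_, hv, ?_⟩, ?_⟩
  · rw [sum_sq_mulVec, hA.mulVec_eigenvectorBasis, dotProduct_smul, smul_eq_mul,
      dotProduct_self_eq_sum_sq, hv, mul_one]
  · rintro _ ⟨w, hw, rfl⟩
    refine Real.sqrt_le_sqrt ?_
    calc ∑ j, (F *ᵥ w) j ^ 2 = w ⬝ᵥ ((Fᵀ * F) *ᵥ w) := sum_sq_mulVec F w
      _ ≤ hA.eigenvalues k * (w ⬝ᵥ w) := hA.dotProduct_mulVec_le hk w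
      _ = hA.eigenvalues k := by rw [dotProduct_self_eq_sum_sq, hw, mul_one]

lemma frobNorm_eq_sqrt_sum_eigenvalues : frobNorm F = √(∑ i, hA.eigenvalues i) := by
  rw [frobNorm, hA.trace_eq_sum_eigenvalues]
  rfl

lemma sum_eigenvalues_lt [NeZero ℓ] {γ : ℝ} (hγ : 0 < γ) (h : frobNorm F / √ℓ < γ) :
    ∑ i, hA.eigenvalues i < Fintype.card (Fin ℓ) * γ ^ 2 := by
  rw [frobNorm_eq_sqrt_sum_eigenvalues hA, ← Real.sqrt_div' _ (Nat.cast_nonneg ℓ),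
    Real.sqrt_lt' hγ, div_lt_iff₀ (Nat.cast_pos.2 (NeZero.pos ℓ))] at h
  simpa [mul_comm] using h

variable {q : ℝ} (hq : ∀ i, 1 - q * hA.eigenvalues i ≠ 0)
include hq

lemma Sq_eq_cfc : Sq F q = cfc (fun x => (1 - q * x)⁻¹) (Fᵀ * F) :=
  hA.inv_one_sub_smul hq

lemma Nfun_eq_sqrt_Nsq : Nfun F q = √(Eigen.Nsq hA.eigenvalues q) := by
  have hmul : Fᵀ * F * Sq F q = cfc (fun x => x * (1 - q * x)⁻¹) (Fᵀ * F) := by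
    rw [Sq_eq_cfc hA hq,
      cfc_mul (fun x => x) _ (Fᵀ * F) (hg := finite_real_spectrum.continuousOn _),
      cfc_id' ℝ (Fᵀ * F)]
  rw [Nfun, hmul, Sq_eq_cfc hA hq, hA.trace_cfc, hA.trace_cfc]
  rfl

lemma AAfun_eq_AA (γ : ℝ) : AAfun F q γ = Eigen.AA hA.eigenvalues (γ ^ 2) q := by
  rw [AAfun, ← hA.cfc_one_sub_mul, hA.det_cfc, Real.log_prod fun i _ => hq i, Eigen.AA,
    Fintype.card_fin]

lemma Afun_eq : Afun F q = -(1 / 2) * Real.log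
    ((ℓ / Eigen.trS hA.eigenvalues q) ^ ℓ * ∏ i, (1 - q * hA.eigenvalues i)⁻¹) := by
  rw [Afun, det_smul, Sq_eq_cfc hA hq, hA.trace_cfc, hA.det_cfc, Fintype.card_fin]
  rfl

end

/-- For every `γ` strictly between `𝒩(0) = ‖F‖_F/√ℓ` and `σ_max(F)`, there is a
unique `q_γ ∈ (0, σ_max(F)^{−2})` with `𝒩(q_γ) = γ`, and `q ↦ 𝔄(q,γ)` attains its
maximum over `[0, σ_max(F)^{−2})` at `q = q_γ`, with maximal value `𝒜(q_γ)`. -/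
theorem AAfun_max
    (s ℓ : ℕ) (F : Matrix (Fin s) (Fin ℓ) ℝ)
    (hΛ : ∀ c : ℝ, Fᵀ * F ≠ c • (1 : Matrix (Fin ℓ) (Fin ℓ) ℝ))
    (γ : ℝ) (hγ₁ : frobNorm F / Real.sqrt ℓ < γ) (hγ₂ : γ < sigmaMax F) :
    ∃ qγ ∈ Set.Ioo (0 : ℝ) ((sigmaMax F ^ 2)⁻¹),
      Nfun F qγ = γ ∧
      (∀ q' ∈ Set.Ioo (0 : ℝ) ((sigmaMax F ^ 2)⁻¹), Nfun F q' = γ → q' = qγ) ∧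
      (∀ q ∈ Set.Ico (0 : ℝ) ((sigmaMax F ^ 2)⁻¹), AAfun F q γ ≤ AAfun F qγ γ) ∧
      AAfun F qγ γ = Afun F qγ := by
  have hA := isHermitian_transpose_mul_self F
  set μ := hA.eigenvalues
  have hμ : ∀ i, 0 ≤ μ i := (posSemidef_transpose_mul_self F).eigenvalues_nonneg
  have : NeZero ℓ := ⟨by rintro rfl; exact hΛ 0 (by ext i; exact i.elim0)⟩
  have hne := hA.exists_eigenvalues_ne hΛ
  obtain ⟨k, hk⟩ := Finite.exists_max μ
  have hM := Eigen.pos_of_ne hμ hk hne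
  have hγ : 0 < γ := (div_nonneg (Real.sqrt_nonneg _) (Real.sqrt_nonneg _)).trans_lt hγ₁
  have hmean := sum_eigenvalues_lt hA hγ hγ₁
  have hγM : γ ^ 2 < μ k := by
    rwa [sigmaMax_eq_sqrt_eigenvalue hA hk, Real.lt_sqrt hγ.le] at hγ₂
  have hden q (hq : q ∈ Ico 0 (μ k)⁻¹) i : 1 - q * μ i ≠ 0 :=
    (Eigen.one_sub_mul_pos hM hq (hk i)).ne'
  have hNfun q (hq : q ∈ Ico 0 (μ k)⁻¹) : Nfun F q = γ ↔ Eigen.Nsq μ q = γ ^ 2 := by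
    rw [Nfun_eq_sqrt_Nsq hA (hden q hq),
      Real.sqrt_eq_iff_eq_sq (Eigen.Nsq_nonneg hμ hM hk hq) hγ.le]
  rw [sigmaMax_eq_sqrt_eigenvalue hA hk, Real.sq_sqrt hM.le]
  obtain ⟨qγ, hqγ, hroot⟩ := Eigen.exists_Nsq_eq hμ hM hk rfl hmean hγM
  have hqγ' := Ioo_subset_Ico_self hqγ
  refine ⟨qγ, hqγ, (hNfun qγ hqγ').2 hroot, fun q hq hNq => ?_, fun q hq => ?_, ?_⟩
  · exact (Eigen.Nsq_strictMonoOn hM hk hne).injOn (Ioo_subset_Ico_self hq) hqγ'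
      (((hNfun q (Ioo_subset_Ico_self hq)).1 hNq).trans hroot.symm)
  · rw [AAfun_eq_AA hA (hden q hq), AAfun_eq_AA hA (hden qγ hqγ')]
    exact Eigen.isMaxOn_AA hM hk hne hγM.le hqγ' hroot hq
  · rw [AAfun_eq_AA hA (hden qγ hqγ'), Afun_eq hA (hden qγ hqγ'),
      Eigen.AA_eq_of_Nsq_eq (fun i => Eigen.one_sub_mul_pos hM hqγ' (hk i)) hroot,
      Fintype.card_fin]
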